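/- arXiv:2007.09270 — 9 statements merged into one kernel-verified Lean document; each statement's English description precedes it below -/
import Mathlib

section
/- Let B1 and B2 be positive integers with B1 ≤ B2, and let e0 be an integer with |e0| ≤ B1. Let f : ℤ → ℚ be the probability mass function of the uniform distribution on the integer interval [-B2, B2], i.e., f z = 1/(2*B2+1) if -B2 ≤ z ≤ B2 and f z = 0 otherwise. Then the statistical distance between f and its translate by e0, namely (1/2) * ∑_{z ∈ Finset.Icc (-B2-B1) (B2+B1)} |f z - f (z - e0)|, is at most B1 / (2*B2 + 1). -/
/-!
The translate of the uniform mass `c = 1 / (2 B2 + 1)` on `[-B2, B2]` by `e0` differs from it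
exactly on the symmetric difference of `[-B2, B2]` and `[-B2 + e0, B2 + e0]`, where the difference
has absolute value `c`. That symmetric difference consists of two runs of `|e0|` integers at the
two ends of the interval, so the sum is at most `2 |e0| c` and the statistical distance at most
`|e0| c ≤ B1 c`.
-/

open Finset
open scoped symmDiff

theorem Finset.sum_abs_ite_sub_ite_le_card_symmDiff {α K : Type*} [DecidableEq α] [Ring K]
    [LinearOrder K] [IsOrderedRing K] (S A B : Finset α) (c : K) :
    ∑ z ∈ S, |(if z ∈ A then c else 0) - (if z ∈ B then c else 0)| ≤ #(A ∆ B) * |c| := by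
  have pointwise : ∀ z, |(if z ∈ A then c else 0) - (if z ∈ B then c else 0)|
      = if z ∈ A ∆ B then |c| else 0 := by
    intro z
    by_cases hA : z ∈ A <;> by_cases hB : z ∈ B <;> simp [mem_symmDiff, hA, hB]
  calc ∑ z ∈ S, |(if z ∈ A then c else 0) - (if z ∈ B then c else 0)|
      = ∑ z ∈ S ∩ A ∆ B, |c| := by rw [sum_congr rfl fun z _ => pointwise z, sum_ite_mem]
    _ = #(S ∩ A ∆ B) * |c| := by rw [sum_const, nsmul_eq_mul]
    _ ≤ #(A ∆ B) * |c| := by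
      gcongr
      exact inter_subset_right

theorem Int.card_Icc_symmDiff_Icc_add_le (a b e : ℤ) :
    (#(Icc a b ∆ Icc (a + e) (b + e)) : ℤ) ≤ 2 * |e| := by
  have card_le_of_subset_union (X Y : Finset ℤ) (h : Icc a b ∆ Icc (a + e) (b + e) ⊆ X ∪ Y) :
      (#(Icc a b ∆ Icc (a + e) (b + e)) : ℤ) ≤ #X + #Y := by
    exact_mod_cast (card_le_card h).trans (card_union_le X Y)
  rcases le_total 0 e with he | he
  · have := card_le_of_subset_union (Ico a (a + e)) (Ioc b (b + e)) <| by
      intro z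
      simp only [mem_symmDiff, mem_Icc, mem_union, mem_Ico, mem_Ioc]
      omega
    rw [Int.card_Ico, Int.card_Ioc] at this
    rw [abs_of_nonneg he]
    omega
  · have := card_le_of_subset_union (Ico (a + e) a) (Ioc (b + e) b) <| by
      intro z
      simp only [mem_symmDiff, mem_Icc, mem_union, mem_Ico, mem_Ioc]
      omega
    rw [Int.card_Ico, Int.card_Ioc] at this
    rw [abs_of_nonpos he]
    omega

theorem smudging_noise_general
    (B1 B2 : ℤ) (hB2 : 0 < B2)
    (e0 : ℤ) (he0 : |e0| ≤ B1)
    (f : ℤ → ℚ)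
    (hf : ∀ z : ℤ, f z = if -B2 ≤ z ∧ z ≤ B2 then 1 / (2 * (B2 : ℚ) + 1) else 0) :
    (1 / 2 : ℚ) * ∑ z ∈ Finset.Icc (-B2 - B1) (B2 + B1), |f z - f (z - e0)|
      ≤ (B1 : ℚ) / (2 * (B2 : ℚ) + 1) := by
  set c : ℚ := 1 / (2 * (B2 : ℚ) + 1)
  have hc : 0 ≤ c := by positivity
  have hf_ite : ∀ z, f z - f (z - e0) = (if z ∈ Icc (-B2) B2 then c else 0)
      - (if z ∈ Icc (-B2 + e0) (B2 + e0) then c else 0) := by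
    intro z
    simp only [hf, mem_Icc]
    congr 2
    exact propext (by omega)
  have hcard : (#(Icc (-B2) B2 ∆ Icc (-B2 + e0) (B2 + e0)) : ℚ) ≤ 2 * B1 := by
    exact_mod_cast (Int.card_Icc_symmDiff_Icc_add_le (-B2) B2 e0).trans (by omega)
  calc (1 / 2 : ℚ) * ∑ z ∈ Icc (-B2 - B1) (B2 + B1), |f z - f (z - e0)|
      ≤ 1 / 2 * (#(Icc (-B2) B2 ∆ Icc (-B2 + e0) (B2 + e0)) * |c|) := by
        simp only [hf_ite]
        gcongr
        exact sum_abs_ite_sub_ite_le_card_symmDiff _ _ _ c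
    _ ≤ 1 / 2 * (2 * B1 * c) := by
        rw [abs_of_nonneg hc]
        gcongr
    _ = B1 / (2 * B2 + 1) := by ring

/-- Smudging Noise Lemma: the statistical distance between the uniform
distribution on the integer interval `[-B2, B2]` and its translate by a
fixed `e0` with `|e0| ≤ B1` is at most `B1 / (2*B2 + 1)`. -/
theorem smudging_noise
    (B1 B2 : ℤ) (hB1 : 0 < B1) (hB2 : 0 < B2) (hB12 : B1 ≤ B2)
    (e0 : ℤ) (he0 : |e0| ≤ B1)
    (f : ℤ → ℚ)
    (hf : ∀ z : ℤ, f z = if -B2 ≤ z ∧ z ≤ B2 then 1 / (2 * (B2 : ℚ) + 1) else 0) :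
    (1 / 2 : ℚ) * ∑ z ∈ Finset.Icc (-B2 - B1) (B2 + B1), |f z - f (z - e0)|
      ≤ (B1 : ℚ) / (2 * (B2 : ℚ) + 1) :=
  smudging_noise_general B1 B2 hB2 e0 he0 f hf
end

section
/- Let q and t be positive integers with t ≤ q, let Δ = q / t (integer division, so Δ = ⌊q/t⌋), and let m, e be integers. If 2 * |t*e - (q - t*Δ)*m| < q, then round of the rational number (t * (Δ*m + e)) / q equals m. -/
/-!
Since `t * Δ = q - (q - t * Δ)`, the numerator `t * (Δ * m + e)` equals `q * m + r` with
`r = t * e - (q - t * Δ) * m`, so the scaled value is `m + r / q`, and `2 * |r| < q` places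
`r / q` strictly inside `(-1/2, 1/2)`, where rounding gives `0`.
-/

section Round

variable {α : Type*} [Field α] [LinearOrder α] [IsStrictOrderedRing α] [FloorRing α]

theorem round_eq_zero_of_two_mul_abs_lt_one {x : α} (h : 2 * |x| < 1) : round x = 0 := by
  rw [round_eq_zero_iff]
  constructor <;> linarith [neg_abs_le x, le_abs_self x]

theorem round_intCast_div_eq_of_two_mul_abs_lt {q m r : ℤ} (h : 2 * |r| < q) :
    round (((q * m + r : ℤ) : α) / q) = m := by
  have hq : (0 : α) < q := by exact_mod_cast (by positivity : 0 ≤ 2 * |r|).trans_lt h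
  have hsplit : ((q * m + r : ℤ) : α) / q = m + (r : α) / q := by
    push_cast
    field_simp
  have hsmall : 2 * |(r : α) / q| < 1 := by
    rw [abs_div, abs_of_pos hq, mul_div_assoc', div_lt_one hq]
    exact_mod_cast h
  rw [hsplit, round_intCast_add, round_eq_zero_of_two_mul_abs_lt_one hsmall, add_zero]

end Round

theorem bfv_rounding_general
    (q t : ℤ)
    (Δ : ℤ) (m e : ℤ)
    (herr : 2 * |t * e - (q - t * Δ) * m| < q) :
    round (((t * (Δ * m + e) : ℤ) : ℚ) / (q : ℚ)) = m := by
  rw [show t * (Δ * m + e) = q * m + (t * e - (q - t * Δ) * m) by ring]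
  exact round_intCast_div_eq_of_two_mul_abs_lt herr

/-- BFV rounding step: recovery of the message after scaling by `t/q`
and rounding to the nearest integer. -/
theorem bfv_rounding
    (q t : ℤ) (hq : 0 < q) (ht : 0 < t) (htq : t ≤ q)
    (Δ : ℤ) (hΔ : Δ = q / t) (m e : ℤ)
    (herr : 2 * |t * e - (q - t * Δ) * m| < q) :
    round (((t * (Δ * m + e) : ℤ) : ℚ) / (q : ℚ)) = m :=
  bfv_rounding_general q t Δ m e herr
end

section
/- Let R be a commutative ring and let n, k be finite index types. Let s : n → R be a row vector, G, C, C' : Matrix n k R, D : Matrix k k R with G * D = C', e, e' : k → R, and m, m' ∈ R. If Matrix.vecMul s C = m • Matrix.vecMul s G + e and Matrix.vecMul s C' = m' • Matrix.vecMul s G + e', then Matrix.vecMul s (C * D) = (m * m') • Matrix.vecMul s G + (m • e' + Matrix.vecMul e D). -/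
/-- GSW homomorphic multiplication identity. -/
theorem gsw_homomorphic_multiplication
    {R : Type*} [CommRing R] {n k : Type*} [Fintype n] [Fintype k]
    (s : n → R) (G C C' : Matrix n k R) (D : Matrix k k R)
    (hGD : G * D = C') (e e' : k → R) (m m' : R)
    (hC : Matrix.vecMul s C = m • Matrix.vecMul s G + e)
    (hC' : Matrix.vecMul s C' = m' • Matrix.vecMul s G + e') :
    Matrix.vecMul s (C * D)
      = (m * m') • Matrix.vecMul s G + (m • e' + Matrix.vecMul e D) := by
  have h1 : Matrix.vecMul s (C * D) = Matrix.vecMul (Matrix.vecMul s C) D := by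
    rw [Matrix.vecMul_vecMul]
  rw [h1, hC, Matrix.add_vecMul, Matrix.smul_vecMul, Matrix.vecMul_vecMul, hGD, hC',
    smul_add, smul_smul, add_assoc]
end

section
/- Let R be a commutative ring and let n, p, k, k' be finite index types. Let s : n → R be a row vector with Matrix.vecMul s A = 0 for some A : Matrix n p R, let R0 : Matrix p k R, G : Matrix n k R, m ∈ R, and set C = A * R0 + m • G. If D : Matrix k k' R and W : Matrix n k' R satisfy G * D = W, then Matrix.vecMul s (C * D) = m • Matrix.vecMul s W. -/
/-- GSW decryption via column extraction (exact, noiseless version). -/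
theorem gsw_decryption_column_extraction
    {R : Type*} [CommRing R] {n p k k' : Type*}
    [Fintype n] [Fintype p] [Fintype k] [Fintype k']
    (s : n → R) (A : Matrix n p R) (hA : Matrix.vecMul s A = 0)
    (R0 : Matrix p k R) (G : Matrix n k R) (m : R)
    (C : Matrix n k R) (hC : C = A * R0 + m • G)
    (D : Matrix k k' R) (W : Matrix n k' R) (hGD : G * D = W) :
    Matrix.vecMul s (C * D) = m • Matrix.vecMul s W := by
  subst hC hGD
  simp [Matrix.add_mul, Matrix.smul_mul, Matrix.vecMul_add, Matrix.smul_vecMul,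
    ← Matrix.mul_assoc, ← Matrix.vecMul_vecMul, hA]
  ext j
  simp [Matrix.vecMul, dotProduct, Finset.mul_sum, mul_comm, mul_left_comm]
end

section
/- Let R be a commutative ring, let p, k, k' be finite index types, and let n be a natural number. Let ŝB : Fin n → R and set sB = Fin.cons 1 (fun i => -ŝB i) : Fin (n+1) → R. Let AB : Matrix (Fin (n+1)) p R satisfy Matrix.vecMul sB AB = 0, let sA : Fin (n+1) → R, G : Matrix (Fin (n+1)) k R, X : Matrix p k R, and let P : Matrix (Fin (n+1)) k R be the matrix whose row 0 equals Matrix.vecMul sA G and whose other rows are zero (P = Matrix.of (Fin.cons (Matrix.vecMul sA G) 0)). Define the re-encryption key rk = AB * X + P. Then (1) Matrix.vecMul sB rk = Matrix.vecMul sA G, and (2) for any C : Matrix (Fin (n+1)) k' R and any D : Matrix k k' R with G * D = C, Matrix.vecMul sB (rk * D) = Matrix.vecMul sA C. -/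
/-- Correctness of the GSW-based proxy re-encryption scheme
(exact, noiseless version). -/
theorem gsw_proxy_reencryption
    {R : Type*} [CommRing R] {p k k' : Type*}
    [Fintype p] [Fintype k] [Fintype k'] (n : ℕ)
    (sBhat : Fin n → R)
    (sB : Fin (n + 1) → R) (hsB : sB = Fin.cons 1 (fun i => -sBhat i))
    (AB : Matrix (Fin (n + 1)) p R) (hAB : Matrix.vecMul sB AB = 0)
    (sA : Fin (n + 1) → R) (G : Matrix (Fin (n + 1)) k R)
    (X : Matrix p k R)
    (P : Matrix (Fin (n + 1)) k R)
    (hP : P = Matrix.of (Fin.cons (Matrix.vecMul sA G) 0))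
    (rk : Matrix (Fin (n + 1)) k R) (hrk : rk = AB * X + P) :
    Matrix.vecMul sB rk = Matrix.vecMul sA G ∧
      ∀ (C : Matrix (Fin (n + 1)) k' R) (D : Matrix k k' R),
        G * D = C → Matrix.vecMul sB (rk * D) = Matrix.vecMul sA C := by
  have hP' : Matrix.vecMul sB P = Matrix.vecMul sA G := by
    ext j
    simp [hP, hsB, Matrix.vecMul, dotProduct, Fin.sum_univ_succ]
  have h1 : Matrix.vecMul sB rk = Matrix.vecMul sA G := by
    rw [hrk, Matrix.vecMul_add, ← Matrix.vecMul_vecMul, hAB, Matrix.zero_vecMul,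
      zero_add, hP']
  refine ⟨h1, fun C D hGD => ?_⟩
  rw [← Matrix.vecMul_vecMul, h1, Matrix.vecMul_vecMul, hGD]
end

section
/- Let R be a commutative ring and let n, k be finite index types. Let s1, s2 : n → R be row vectors, C, F, X, G : Matrix n k R, m ∈ R, and w : k → R. Suppose Matrix.vecMul s1 C = m • Matrix.vecMul s1 G, Matrix.vecMul s2 F = w + m • Matrix.vecMul s2 G, and Matrix.vecMul s1 X = -w. Then Matrix.vecMul (Sum.elim s1 s2) (Matrix.fromBlocks C X 0 F) = Sum.elim (m • Matrix.vecMul s1 G) (m • Matrix.vecMul s2 G). -/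
/-- Decryption correctness of the extended (two-key) ciphertext in
multi-key GSW schemes. -/
theorem mkgsw_extended_ciphertext_decryption
    {R : Type*} [CommRing R] {n k : Type*} [Fintype n] [Fintype k]
    (s1 s2 : n → R) (C F X G : Matrix n k R) (m : R) (w : k → R)
    (hC : Matrix.vecMul s1 C = m • Matrix.vecMul s1 G)
    (hF : Matrix.vecMul s2 F = w + m • Matrix.vecMul s2 G)
    (hX : Matrix.vecMul s1 X = -w) :
    Matrix.vecMul (Sum.elim s1 s2) (Matrix.fromBlocks C X 0 F)
      = Sum.elim (m • Matrix.vecMul s1 G) (m • Matrix.vecMul s2 G) := by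
  rw [Matrix.vecMul_fromBlocks]
  simp [hC, hF, hX]
end

section
/- Let R be a commutative ring, s, t ∈ R, ℓ a natural number, and u, g, â, ê : Fin ℓ → R. Let c0, c1, c0', c1' ∈ R and suppose ∑_{i} u i * g i = c1 * c1'. Define b̂ i = -s * (â i) + t * (ê i) + s^2 * (g i) for each i. Then (c0*c0' + ∑_{i} u i * b̂ i) + (c0*c1' + c0'*c1 + ∑_{i} u i * â i) * s = (c0 + c1*s) * (c0' + c1'*s) + t * ∑_{i} u i * ê i. -/
/-- Correctness of relinearization (key switching) after homomorphic
multiplication in the BGV scheme. -/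
theorem bgv_relinearization
    {R : Type*} [CommRing R] (s t : R) (ℓ : ℕ)
    (u g ahat ehat : Fin ℓ → R) (c0 c1 c0' c1' : R)
    (hdecomp : ∑ i, u i * g i = c1 * c1')
    (bhat : Fin ℓ → R)
    (hb : ∀ i, bhat i = -s * (ahat i) + t * (ehat i) + s ^ 2 * (g i)) :
    (c0 * c0' + ∑ i, u i * bhat i)
      + (c0 * c1' + c0' * c1 + ∑ i, u i * ahat i) * s
      = (c0 + c1 * s) * (c0' + c1' * s) + t * ∑ i, u i * ehat i := by
  simp only [hb, mul_add, Finset.sum_add_distrib]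
  have h1 : ∑ i, u i * (s ^ 2 * g i) = s ^ 2 * (c1 * c1') := by
    rw [← hdecomp, Finset.mul_sum]; apply Finset.sum_congr rfl; intros; ring
  have h2 : ∑ i, u i * (t * ehat i) = t * ∑ i, u i * ehat i := by
    rw [Finset.mul_sum]; apply Finset.sum_congr rfl; intros; ring
  have h3 : ∑ i, u i * (-s * ahat i) = -s * ∑ i, u i * ahat i := by
    rw [Finset.mul_sum]; apply Finset.sum_congr rfl; intros; ring
  rw [h1, h2, h3]; ring
end

section
/- Let R be a commutative ring. Suppose f1 = 2*f1' + 1, f2 = 2*f2' + 1, f1*h1 = 2*g1, and f2*h2 = 2*g2 for elements f1, f1', f2, f2', h1, h2, g1, g2 ∈ R, and let c1 = h1*u1 + 2*e1 + m1 and c2 = h2*u2 + 2*e2 + m2 for elements u1, u2, e1, e2, m1, m2 ∈ R. Then (2 : R) divides f1*f2*(c1 + c2) - (m1 + m2). -/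
/-- Multi-key homomorphic-addition correctness of the LTV scheme. -/
theorem ltv_multikey_addition
    {R : Type*} [CommRing R]
    (f1 f1' f2 f2' h1 h2 g1 g2 u1 u2 e1 e2 m1 m2 c1 c2 : R)
    (hf1 : f1 = 2 * f1' + 1) (hf2 : f2 = 2 * f2' + 1)
    (hfh1 : f1 * h1 = 2 * g1) (hfh2 : f2 * h2 = 2 * g2)
    (hc1 : c1 = h1 * u1 + 2 * e1 + m1)
    (hc2 : c2 = h2 * u2 + 2 * e2 + m2) :
    (2 : R) ∣ f1 * f2 * (c1 + c2) - (m1 + m2) := by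
  refine ⟨f2 * g1 * u1 + f1 * g2 * u2 + f1 * f2 * (e1 + e2)
    + (2 * f1' * f2' + f1' + f2') * (m1 + m2), ?_⟩
  have h1' : f1 * f2 * (h1 * u1) = 2 * (f2 * g1 * u1) := by
    calc f1 * f2 * (h1 * u1) = (f1 * h1) * (f2 * u1) := by ring
    _ = 2 * (f2 * g1 * u1) := by rw [hfh1]; ring
  have h2' : f1 * f2 * (h2 * u2) = 2 * (f1 * g2 * u2) := by
    calc f1 * f2 * (h2 * u2) = (f2 * h2) * (f1 * u2) := by ring
    _ = 2 * (f1 * g2 * u2) := by rw [hfh2]; ring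
  subst hc1 hc2
  have : f1 * f2 * (m1 + m2) - (m1+m2) = 2 * ((2 * f1' * f2' + f1' + f2') * (m1 + m2)) := by
    rw [hf1, hf2]; ring
  linear_combination h1' + h2' + this
end

section
/- Let R be a commutative ring. Suppose f1 = 2*f1' + 1, f2 = 2*f2' + 1, f1*h1 = 2*g1, and f2*h2 = 2*g2 for elements f1, f1', f2, f2', h1, h2, g1, g2 ∈ R, and let c1 = h1*u1 + 2*e1 + m1 and c2 = h2*u2 + 2*e2 + m2 for elements u1, u2, e1, e2, m1, m2 ∈ R. Then (2 : R) divides f1*f2*(c1*c2) - m1*m2. -/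
/-- Multi-key homomorphic-multiplication correctness of the LTV scheme. -/
theorem ltv_multikey_multiplication
    {R : Type*} [CommRing R]
    (f1 f1' f2 f2' h1 h2 g1 g2 u1 u2 e1 e2 m1 m2 c1 c2 : R)
    (hf1 : f1 = 2 * f1' + 1) (hf2 : f2 = 2 * f2' + 1)
    (hfh1 : f1 * h1 = 2 * g1) (hfh2 : f2 * h2 = 2 * g2)
    (hc1 : c1 = h1 * u1 + 2 * e1 + m1)
    (hc2 : c2 = h2 * u2 + 2 * e2 + m2) :
    (2 : R) ∣ f1 * f2 * (c1 * c2) - m1 * m2 := by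
  set A := g1 * u1 + f1 * e1 + f1' * m1 with hA
  set B := g2 * u2 + f2 * e2 + f2' * m2 with hB
  refine ⟨A * (m2 + 2 * B) + B * m1, ?_⟩
  have h1c : f1 * c1 = m1 + 2 * A := by
    rw [hc1, hA]; linear_combination (u1 : R) * hfh1 + m1 * hf1
  have h2c : f2 * c2 = m2 + 2 * B := by
    rw [hc2, hB]; linear_combination (u2 : R) * hfh2 + m2 * hf2
  calc f1 * f2 * (c1 * c2) - m1 * m2
      = (f1 * c1) * (f2 * c2) - m1 * m2 := by ring
    _ = (m1 + 2 * A) * (m2 + 2 * B) - m1 * m2 := by rw [h1c, h2c]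
    _ = 2 * (A * (m2 + 2 * B) + B * m1) := by ring
end
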